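/- arXiv:0707.1361 — 2 statements merged into one kernel-verified Lean document; each statement's English description precedes it below -/
import Mathlib

section
/- Let f and g be w-homogeneous polynomials in k[x] with deg_w f > 0 and deg_w g > 0, for some w ∈ Γ^n, and suppose l and m are coprime natural numbers and α ∈ k satisfies g^l = α·f^m. Then I(k[f], g) = ( y^l − α·f^m )·k[f][y], i.e., the kernel of the substitution map k[f][y] → k[x], Φ ↦ Φ(g), is the principal ideal generated by y^l − α·f^m. -/
open MvPolynomial Polynomial

set_option synthInstance.maxHeartbeats 1000000
set_option maxHeartbeats 1000000

variable {k : Type*} [Field k] [CharZero k] {n : ℕ}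
variable {Γ : Type*} [AddCommGroup Γ] [LinearOrder Γ] [IsOrderedAddMonoid Γ]

/-- The `w`-degree of a multivariate polynomial, with `wdeg w 0 = ⊥ = -∞`. -/
noncomputable def wdeg (w : Fin n → Γ) (f : MvPolynomial (Fin n) k) : WithBot Γ :=
  f.support.sup fun d => ((∑ i, d i • w i : Γ) : WithBot Γ)

/-- The leading `w`-homogeneous form `f^w` of `f`. -/
noncomputable def lform (w : Fin n → Γ) (f : MvPolynomial (Fin n) k) :
    MvPolynomial (Fin n) k :=
  letI : DecidableEq (WithBot Γ) := Classical.decEq _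
  ∑ d ∈ f.support.filter
      (fun d => ((∑ i, d i • w i : Γ) : WithBot Γ) = wdeg w f),
    MvPolynomial.monomial d (f.coeff d)

/-- `deg_w^g Φ = max_i deg_w (φ_i g^i)` for `Φ = Σ_i φ_i y^i`. -/
noncomputable def wdegG (w : Fin n → Γ) (g : MvPolynomial (Fin n) k)
    (Φ : Polynomial (MvPolynomial (Fin n) k)) : WithBot Γ :=
  Φ.support.sup fun i => wdeg w (Φ.coeff i * g ^ i)

/-- The leading form `Φ^{w,g}` of `Φ` for the grading in which `x_j` has weight `w_j`
and `y` has weight `deg_w g`: the sum of `φ_i^w y^i` over those `i` with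
`deg_w (φ_i g^i) = deg_w^g Φ`. -/
noncomputable def pLform (w : Fin n → Γ) (g : MvPolynomial (Fin n) k)
    (Φ : Polynomial (MvPolynomial (Fin n) k)) : Polynomial (MvPolynomial (Fin n) k) :=
  letI : DecidableEq (WithBot Γ) := Classical.decEq _
  ∑ i ∈ Φ.support.filter (fun i => wdeg w (Φ.coeff i * g ^ i) = wdegG w g Φ),
    Polynomial.C (lform w (Φ.coeff i)) * Polynomial.X ^ i

/-- `m_w^g(Φ) = min { i : deg_w^g (∂_y^i Φ) = deg_w ((∂_y^i Φ)(g)) }`. -/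
noncomputable def mwg (w : Fin n → Γ) (g : MvPolynomial (Fin n) k)
    (Φ : Polynomial (MvPolynomial (Fin n) k)) : ℕ :=
  sInf {i : ℕ |
    wdegG w g (Polynomial.derivative^[i] Φ) = wdeg w ((Polynomial.derivative^[i] Φ).eval g)}

/-- The `w`-degree of the differential form `dh_1 ∧ ⋯ ∧ dh_s`: the maximum over all
`s`-tuples of indices of the `w`-degree of the corresponding `s × s` Jacobian minor
plus the sum of the corresponding weights (noninjective tuples contribute `⊥`). -/
noncomputable def wedgeDeg (w : Fin n → Γ) {s : ℕ} (h : Fin s → MvPolynomial (Fin n) k) :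
    WithBot Γ :=
  Finset.univ.sup fun e : Fin s → Fin n =>
    wdeg w (Matrix.det (Matrix.of fun a b : Fin s => MvPolynomial.pderiv (e b) (h a)))
      + ((∑ b, w (e b) : Γ) : WithBot Γ)

/-- The initial algebra `A^w`: the `k`-subalgebra generated by `f^w` for `f ∈ A \ {0}`. -/
noncomputable def initAlg (w : Fin n → Γ) (A : Subalgebra k (MvPolynomial (Fin n) k)) :
    Subalgebra k (MvPolynomial (Fin n) k) :=
  Algebra.adjoin k (lform w '' ((A : Set (MvPolynomial (Fin n) k)) \ {0}))

/-- The field of fractions `K^w` of `A^w`, realized as a subfield of the fraction field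
of `k[x]`. -/
noncomputable def KW (w : Fin n → Γ) (A : Subalgebra k (MvPolynomial (Fin n) k)) :
    Subfield (FractionRing (MvPolynomial (Fin n) k)) :=
  Subfield.closure
    (algebraMap (MvPolynomial (Fin n) k) (FractionRing (MvPolynomial (Fin n) k)) ''
      (initAlg w A : Set (MvPolynomial (Fin n) k)))

/-- The field of fractions of a subalgebra `A` of `k[x]`, realized as a subfield of the
fraction field of `k[x]`. -/
noncomputable def fracSub (A : Subalgebra k (MvPolynomial (Fin n) k)) :
    Subfield (FractionRing (MvPolynomial (Fin n) k)) :=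
  Subfield.closure
    (algebraMap (MvPolynomial (Fin n) k) (FractionRing (MvPolynomial (Fin n) k)) ''
      (A : Set (MvPolynomial (Fin n) k)))

/-- A polynomial is `w`-homogeneous if all its monomials have the same `w`-degree. -/
def IsWHom (w : Fin n → Γ) (f : MvPolynomial (Fin n) k) : Prop :=
  ∃ γ : Γ, ∀ d ∈ f.support, (∑ i, d i • w i : Γ) = γ

/-! Every element of `k[f]` involves only monomials whose `w`-degree lies in `ℕ • deg f`, so
for `φ ∈ k[f]` the monomials of `φ gⁱ` have `w`-degrees in `ℕ • deg f + i • deg g`. Since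
`l • deg g = m • deg f` with `l, m` coprime, these sets are disjoint for distinct `i < l`, so
`g` satisfies no nonzero relation of degree `< l` over `k[f]`; division with remainder by the
monic `y^l - α f^m` then identifies the kernel. -/

theorem eq_of_nsmul_add_nsmul_eq {M : Type*} [AddCommMonoid M] [PartialOrder M]
    [IsOrderedCancelAddMonoid M] {γ δ : M} (hγ : 0 < γ) {l m : ℕ} (hrel : l • δ = m • γ)
    (hco : l.Coprime m) {a b i j : ℕ} (hi : i < l) (hj : j < l)
    (h : a • γ + i • δ = b • γ + j • δ) : i = j := by
  have hscale : ∀ a i : ℕ, (l * a + i * m) • γ = l • (a • γ + i • δ) := fun a i => by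
    rw [smul_add, add_nsmul, mul_nsmul', mul_nsmul', smul_comm l i, hrel]
  have hnat : l * a + i * m = l * b + j * m :=
    (nsmul_left_strictMono hγ).injective (by simp only [hscale, h])
  have hmod : i * m ≡ j * m [MOD l] := by
    simpa [Nat.ModEq, Nat.add_mod, Nat.mul_mod_right] using congrArg (· % l) hnat
  exact (Nat.ModEq.cancel_right_of_coprime hco hmod).eq_of_lt_of_lt hi hj

namespace MvPolynomial

section AddCommMonoid

variable {σ R M : Type*} [CommSemiring R] [AddCommMonoid M]

variable (R) in
def weightSubalgebra (w : σ → M) (S : AddSubmonoid M) : Subalgebra R (MvPolynomial σ R) where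
  carrier := {p | ∀ d ∈ p.support, Finsupp.weight w d ∈ S}
  mul_mem' {p q} hp hq d hd := by
    classical
    obtain ⟨a, ha, b, hb, rfl⟩ := Finset.mem_add.mp (support_mul p q hd)
    rw [map_add]
    exact S.add_mem (hp a ha) (hq b hb)
  add_mem' {p q} hp hq d hd := by
    classical
    rcases Finset.mem_union.mp (support_add hd) with h | h
    exacts [hp d h, hq d h]
  algebraMap_mem' r d hd := by
    classical
    rw [algebraMap_eq, support_C] at hd
    split_ifs at hd
    · simp at hd
    · rw [Finset.mem_singleton.mp hd, map_zero]
      exact S.zero_mem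

theorem IsWeightedHomogeneous.adjoin_le_weightSubalgebra {w : σ → M} {f : MvPolynomial σ R}
    {γ : M} (hf : IsWeightedHomogeneous w f γ) :
    Algebra.adjoin R {f} ≤ weightSubalgebra R w (AddSubmonoid.multiples γ) :=
  Algebra.adjoin_le <| Set.singleton_subset_iff.mpr fun _ hd =>
    ⟨1, (one_nsmul γ).trans (hf (mem_support_iff.mp hd)).symm⟩

theorem exists_weight_eq_add_of_mem_support_mul {w : σ → M} {S : AddSubmonoid M} {δ : M}
    {p q : MvPolynomial σ R} (hp : p ∈ weightSubalgebra R w S)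
    (hq : IsWeightedHomogeneous w q δ) {d : σ →₀ ℕ} (hd : d ∈ (p * q).support) :
    ∃ s ∈ S, s + δ = Finsupp.weight w d := by
  classical
  obtain ⟨a, ha, b, hb, rfl⟩ := Finset.mem_add.mp (support_mul p q hd)
  exact ⟨_, hp a ha, by rw [map_add, hq (mem_support_iff.mp hb)]⟩

theorem eq_zero_of_sum_eq_zero_of_pairwiseDisjoint {w : σ → M} {ι : Type*} {s : Finset ι}
    {p : ι → MvPolynomial σ R} {D : ι → Set M}
    (hp : ∀ i ∈ s, ∀ d ∈ (p i).support, Finsupp.weight w d ∈ D i)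
    (hD : (s : Set ι).PairwiseDisjoint D) (hsum : ∑ i ∈ s, p i = 0) {i : ι} (hi : i ∈ s) :
    p i = 0 := by
  ext d
  by_contra hd
  have hdi := hp i hi d (mem_support_iff.mpr hd)
  have hcoeff : coeff d (∑ j ∈ s, p j) = coeff d (p i) := by
    rw [coeff_sum]
    refine Finset.sum_eq_single_of_mem i hi fun j hj hji => ?_
    by_contra hdj
    exact Set.disjoint_left.mp (hD hj hi hji) (hp j hj d (mem_support_iff.mpr hdj)) hdi
  rw [hsum, coeff_zero] at hcoeff
  exact hd hcoeff.symm

end AddCommMonoid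

theorem eq_zero_of_aeval_eq_zero_of_degree_lt {σ R M : Type*} [CommRing R] [IsDomain R]
    [AddCommMonoid M] [PartialOrder M] [IsOrderedCancelAddMonoid M] {w : σ → M}
    {f g : MvPolynomial σ R} {γ δ : M} (hf : IsWeightedHomogeneous w f γ) (hγ : 0 < γ)
    (hg : IsWeightedHomogeneous w g δ) (hg0 : g ≠ 0) {l m : ℕ} (hrel : l • δ = m • γ)
    (hco : l.Coprime m) {Q : (Algebra.adjoin R {f})[X]} (hQ : Q.degree < l)
    (hQg : Polynomial.aeval g Q = 0) : Q = 0 := by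
  by_contra hQ0
  have hQl : Q.natDegree < l := (natDegree_lt_iff_degree_lt hQ0).mpr hQ
  set p : ℕ → MvPolynomial σ R := fun i => (Q.coeff i : MvPolynomial σ R) * g ^ i
  have hsum : ∑ i ∈ Finset.range l, p i = 0 := by
    rw [← hQg, aeval_eq_sum_range' hQl]
    rfl
  have hweights : ∀ i ∈ Finset.range l, ∀ d ∈ (p i).support,
      Finsupp.weight w d ∈ {x | ∃ a : ℕ, a • γ + i • δ = x} := fun i _ d hd => by
    obtain ⟨_, ⟨a, rfl⟩, hd⟩ := exists_weight_eq_add_of_mem_support_mul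
      (hf.adjoin_le_weightSubalgebra (Q.coeff i).2) (hg.pow i) hd
    exact ⟨a, hd⟩
  have hdisjoint : ((Finset.range l : Finset ℕ) : Set ℕ).PairwiseDisjoint
      fun i => {x | ∃ a : ℕ, a • γ + i • δ = x} := by
    intro i hi j hj hij
    refine Set.disjoint_left.mpr ?_
    rintro x ⟨a, rfl⟩ ⟨b, hb⟩
    exact hij (eq_of_nsmul_add_nsmul_eq hγ hrel hco (Finset.mem_range.mp hi)
      (Finset.mem_range.mp hj) hb.symm)
  refine hQ0 (Polynomial.ext fun i => ?_)
  rcases lt_or_ge i l with hi | hi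
  · have hpi := eq_zero_of_sum_eq_zero_of_pairwiseDisjoint hweights hdisjoint hsum
      (Finset.mem_range.mpr hi)
    simpa [p, hg0] using hpi
  · exact coeff_eq_zero_of_natDegree_lt (hQl.trans_le hi)

end MvPolynomial

theorem Polynomial.ker_aeval_eq_span_singleton {R S : Type*} [CommRing R] [Nontrivial R]
    [CommRing S] [Algebra R S] {s : S} {P : R[X]} (hP : P.Monic) (hPs : aeval s P = 0)
    (hmin : ∀ Q : R[X], Q.degree < P.degree → aeval s Q = 0 → Q = 0) :
    RingHom.ker (aeval s : R[X] →ₐ[R] S) = Ideal.span {P} := by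
  ext Q
  rw [RingHom.mem_ker, Ideal.mem_span_singleton]
  refine ⟨fun hQ => (modByMonic_eq_zero_iff_dvd hP).mp ?_,
    fun hPQ => aeval_eq_zero_of_dvd_aeval_eq_zero hPQ hPs⟩
  refine hmin _ (degree_modByMonic_lt Q hP) ?_
  rw [modByMonic_eq_sub_mul_div, map_sub, map_mul, hQ, hPs, zero_mul, sub_zero]

theorem IsWHom.exists_pos_isWeightedHomogeneous {K G : Type*} [Field K] [AddCommGroup G]
    [LinearOrder G] {N : ℕ} {w : Fin N → G} {f : MvPolynomial (Fin N) K} (hf : IsWHom w f)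
    (hdf : ((0 : G) : WithBot G) < wdeg w f) :
    ∃ γ, 0 < γ ∧ IsWeightedHomogeneous w f γ ∧ f ≠ 0 := by
  obtain ⟨γ, hγ⟩ := hf
  have hfγ : IsWeightedHomogeneous w f γ := fun {d} hd => by
    rw [Finsupp.weight_eq_sum]
    exact hγ d (mem_support_iff.mpr hd)
  have hf0 : f ≠ 0 := by
    rintro rfl
    simp [wdeg] at hdf
  have hwdeg : wdeg w f = γ := by
    rw [← hfγ.weighted_total_degree hf0]
    simp only [wdeg, weightedTotalDegree', Finsupp.weight_eq_sum]
  exact ⟨γ, WithBot.coe_lt_coe.mp (hwdeg ▸ hdf), hfγ, hf0⟩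

theorem stmt10_general (w : Fin n → Γ) (f g : MvPolynomial (Fin n) k)
    (hf : IsWHom w f) (hg : IsWHom w g)
    (hdf : ((0 : Γ) : WithBot Γ) < wdeg w f) (hdg : ((0 : Γ) : WithBot Γ) < wdeg w g)
    (l m : ℕ) (hl : 0 < l) (hco : Nat.Coprime l m)
    (α : k) (hrel : g ^ l = MvPolynomial.C α * f ^ m)
    (c : Algebra.adjoin k ({f} : Set (MvPolynomial (Fin n) k)))
    (hc : (c : MvPolynomial (Fin n) k) = MvPolynomial.C α * f ^ m) :
    RingHom.ker
        (Polynomial.aeval g :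
          Polynomial (Algebra.adjoin k ({f} : Set (MvPolynomial (Fin n) k)))
            →ₐ[Algebra.adjoin k ({f} : Set (MvPolynomial (Fin n) k))]
          MvPolynomial (Fin n) k)
      = Ideal.span {Polynomial.X ^ l - Polynomial.C c} := by
  obtain ⟨γ, hγ, hf, -⟩ := hf.exists_pos_isWeightedHomogeneous hdf
  obtain ⟨δ, -, hg, hg0⟩ := hg.exists_pos_isWeightedHomogeneous hdg
  have hdeg : l • δ = m • γ := by
    refine (hg.pow l).inj_right (pow_ne_zero l hg0) ?_
    rw [hrel]
    exact (hf.pow m).C_mul α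
  refine Polynomial.ker_aeval_eq_span_singleton (monic_X_pow_sub_C c hl.ne') ?_ ?_
  · simp [← hc, hrel]
  · rw [degree_X_pow_sub_C hl]
    exact fun Q hQ => eq_zero_of_aeval_eq_zero_of_degree_lt hf hγ hg hg0 hdeg hco hQ

/-- If `f, g` are `w`-homogeneous of positive `w`-degree, `l, m` are coprime natural
numbers and `α ∈ k` satisfies `g^l = α f^m`, then the kernel of the substitution map
`k[f][y] → k[x]`, `Φ ↦ Φ(g)`, is the principal ideal generated by `y^l − α f^m`. -/
theorem stmt10 (w : Fin n → Γ) (f g : MvPolynomial (Fin n) k)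
    (hf : IsWHom w f) (hg : IsWHom w g)
    (hdf : ((0 : Γ) : WithBot Γ) < wdeg w f) (hdg : ((0 : Γ) : WithBot Γ) < wdeg w g)
    (l m : ℕ) (hl : 0 < l) (hm : 0 < m) (hco : Nat.Coprime l m)
    (α : k) (hrel : g ^ l = MvPolynomial.C α * f ^ m)
    (c : Algebra.adjoin k ({f} : Set (MvPolynomial (Fin n) k)))
    (hc : (c : MvPolynomial (Fin n) k) = MvPolynomial.C α * f ^ m) :
    RingHom.ker
        (Polynomial.aeval g :
          Polynomial (Algebra.adjoin k ({f} : Set (MvPolynomial (Fin n) k)))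
            →ₐ[Algebra.adjoin k ({f} : Set (MvPolynomial (Fin n) k))]
          MvPolynomial (Fin n) k)
      = Ideal.span {Polynomial.X ^ l - Polynomial.C c} :=
  stmt10_general w f g hf hg hdf hdg l m hl hco α hrel c hc
end

section
/- Let g_1, …, g_r ∈ k[x] (r ≥ 0) and w ∈ Γ^n. If g_1^w, …, g_r^w are algebraically independent over k, then the initial algebra of k[g_1,…,g_r] for w equals k[g_1^w,…,g_r^w], i.e., k[g_1,…,g_r]^w = k[g_1^w,…,g_r^w]. -/
open MvPolynomial Polynomial

set_option synthInstance.maxHeartbeats 1000000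
set_option maxHeartbeats 1000000

variable {k : Type*} [Field k] [CharZero k] {n : ℕ}
variable {Γ : Type*} [AddCommGroup Γ] [LinearOrder Γ] [IsOrderedAddMonoid Γ]

/-! Give the variable `y_i` the weight `δ_i = deg_w g_i`. For `P ∈ k[y]` with `δ`-leading form
`P^δ`, the polynomial `P^δ(g^w)` is `w`-homogeneous of degree `deg_δ P`, while `P(g) - P^δ(g^w)`
has smaller `w`-degree: substituting `g` into `P - P^δ` stays below `deg_δ P`, and substituting
`g` instead of `g^w` into the `δ`-homogeneous `P^δ` only changes terms of lower degree. Algebraic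
independence makes `P^δ(g^w) ≠ 0`, so `(P(g))^w = P^δ(g^w) ∈ k[g^w]`. -/

namespace MvPolynomial

variable {R σ τ M : Type*} [CommSemiring R] [AddCommMonoid M]

theorem isWeightedHomogeneous_finsuppProd_pow {w : τ → M} {δ : σ → M}
    {h : σ → MvPolynomial τ R} (hh : ∀ i, IsWeightedHomogeneous w (h i) (δ i)) (d : σ →₀ ℕ) :
    IsWeightedHomogeneous w (d.prod fun i e => h i ^ e) (Finsupp.weight δ d) := by
  rw [Finsupp.weight_apply]
  exact IsWeightedHomogeneous.prod _ _ _ fun i _ => (hh i).pow (d i)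

theorem IsWeightedHomogeneous.aeval {w : τ → M} {δ : σ → M} {h : σ → MvPolynomial τ R}
    (hh : ∀ i, IsWeightedHomogeneous w (h i) (δ i)) {P : MvPolynomial σ R} {m : M}
    (hP : IsWeightedHomogeneous δ P m) : IsWeightedHomogeneous w (aeval h P) m := by
  induction hP using IsWeightedHomogeneous.induction_on with
  | zero => simpa using isWeightedHomogeneous_zero R w m
  | add p q _ _ hp hq => rw [map_add]; exact hp.add hq
  | monomial d c hd =>
    rw [aeval_monomial, ← hd, ← C_eq_algebraMap]
    exact (isWeightedHomogeneous_finsuppProd_pow hh d).C_mul c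

end MvPolynomial

section LeadingForm

variable {k : Type*} [Field k] {n : ℕ} {Γ : Type*} [AddCommGroup Γ] (w : Fin n → Γ)

theorem sum_smul_eq_weight (d : Fin n →₀ ℕ) : ∑ i, d i • w i = Finsupp.weight w d := by
  simp [Finsupp.weight_apply, Finsupp.sum_fintype]

variable [LinearOrder Γ] {f g H : MvPolynomial (Fin n) k}

theorem wdeg_eq_weightedTotalDegree' (f : MvPolynomial (Fin n) k) :
    wdeg w f = weightedTotalDegree' w f := by
  simp only [wdeg, weightedTotalDegree', sum_smul_eq_weight]

theorem wdeg_eq_bot_iff : wdeg w f = ⊥ ↔ f = 0 := by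
  rw [wdeg_eq_weightedTotalDegree', weightedTotalDegree'_eq_bot_iff]

theorem wdeg_le_iff {γ : WithBot Γ} :
    wdeg w f ≤ γ ↔ ∀ d ∈ f.support, (Finsupp.weight w d : WithBot Γ) ≤ γ := by
  rw [wdeg_eq_weightedTotalDegree', weightedTotalDegree', Finset.sup_le_iff]

theorem wdeg_lt_iff {γ : WithBot Γ} (hγ : ⊥ < γ) :
    wdeg w f < γ ↔ ∀ d ∈ f.support, (Finsupp.weight w d : WithBot Γ) < γ := by
  rw [wdeg_eq_weightedTotalDegree', weightedTotalDegree', Finset.sup_lt_iff hγ]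

theorem wdeg_zero : wdeg w (0 : MvPolynomial (Fin n) k) = ⊥ :=
  (wdeg_eq_bot_iff w).mpr rfl

theorem exists_wdeg_eq (hf : f ≠ 0) : ∃ m : Γ, wdeg w f = m :=
  WithBot.ne_bot_iff_exists.mp (mt (wdeg_eq_bot_iff w).mp hf) |>.imp fun _ => Eq.symm

theorem le_wdeg {d : Fin n →₀ ℕ} (hd : d ∈ f.support) :
    (Finsupp.weight w d : WithBot Γ) ≤ wdeg w f :=
  (wdeg_le_iff w).mp le_rfl d hd

theorem coeff_lform (d : Fin n →₀ ℕ) : (lform w f).coeff d =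
    if (Finsupp.weight w d : WithBot Γ) = wdeg w f then f.coeff d else 0 := by
  classical
  rw [lform, MvPolynomial.coeff_sum]
  simp only [MvPolynomial.coeff_monomial, Finset.sum_ite_eq', Finset.mem_filter,
    MvPolynomial.mem_support_iff, sum_smul_eq_weight]
  split_ifs <;> simp_all

theorem lform_eq_weightedHomogeneousComponent {m : Γ} (hf : wdeg w f = m) :
    lform w f = weightedHomogeneousComponent w m f := by
  classical
  ext d
  simp only [coeff_lform, coeff_weightedHomogeneousComponent, hf, WithBot.coe_inj]

theorem isWeightedHomogeneous_lform {m : Γ} (hf : wdeg w f = m) :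
    IsWeightedHomogeneous w (lform w f) m := by
  rw [lform_eq_weightedHomogeneousComponent w hf]
  exact weightedHomogeneousComponent_isWeightedHomogeneous m f

theorem lform_zero : lform w (0 : MvPolynomial (Fin n) k) = 0 := by
  simp [lform]

theorem lform_ne_zero (hf : f ≠ 0) : lform w f ≠ 0 := by
  obtain ⟨d, hd, hmax⟩ := Finset.exists_mem_eq_sup f.support
    (MvPolynomial.support_nonempty.mpr hf) fun d => (Finsupp.weight w d : WithBot Γ)
  rw [← weightedTotalDegree', ← wdeg_eq_weightedTotalDegree'] at hmax
  refine MvPolynomial.ne_zero_iff.mpr ⟨d, ?_⟩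
  rwa [coeff_lform, if_pos hmax.symm, ← MvPolynomial.mem_support_iff]

theorem wdeg_lform (f : MvPolynomial (Fin n) k) : wdeg w (lform w f) = wdeg w f := by
  obtain rfl | hf := eq_or_ne f 0
  · rw [lform_zero]
  obtain ⟨m, hm⟩ := exists_wdeg_eq w hf
  rw [wdeg_eq_weightedTotalDegree', hm,
    (isWeightedHomogeneous_lform w hm).weighted_total_degree (lform_ne_zero w hf)]

theorem wdeg_sub_lform_lt (hf : f ≠ 0) : wdeg w (f - lform w f) < wdeg w f := by
  refine (wdeg_lt_iff w (Ne.bot_lt (mt (wdeg_eq_bot_iff w).mp hf))).mpr fun d hd => ?_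
  rw [MvPolynomial.mem_support_iff, MvPolynomial.coeff_sub, coeff_lform] at hd
  split_ifs at hd with hdeg
  · exact absurd (sub_self _) hd
  · rw [sub_zero, ← MvPolynomial.mem_support_iff] at hd
    exact (le_wdeg w hd).lt_of_ne hdeg

theorem wdeg_add_le (f g : MvPolynomial (Fin n) k) :
    wdeg w (f + g) ≤ max (wdeg w f) (wdeg w g) := by
  classical
  refine (wdeg_le_iff w).mpr fun d hd => ?_
  rcases Finset.mem_union.mp (MvPolynomial.support_add hd) with hf | hg
  · exact le_max_of_le_left (le_wdeg w hf)
  · exact le_max_of_le_right (le_wdeg w hg)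

theorem wdeg_smul_le (c : k) (f : MvPolynomial (Fin n) k) : wdeg w (c • f) ≤ wdeg w f :=
  (wdeg_le_iff w).mpr fun _ hd => le_wdeg w (MvPolynomial.support_smul hd)

theorem lform_eq_of_wdeg_sub_lt {γ : Γ} (hH : H ≠ 0) (hhom : IsWeightedHomogeneous w H γ)
    (hlt : wdeg w (f - H) < γ) : lform w f = H := by
  have hcoeff : ∀ d, Finsupp.weight w d = γ → f.coeff d = H.coeff d := by
    intro d hd
    by_contra hne
    have hmem : d ∈ (f - H).support := by
      rw [MvPolynomial.mem_support_iff, MvPolynomial.coeff_sub]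
      exact sub_ne_zero.mpr hne
    exact (le_wdeg w hmem).not_gt (hd ▸ hlt)
  have hdeg : wdeg w f = γ := by
    refine le_antisymm ?_ ?_
    · calc wdeg w f = wdeg w (f - H + H) := by rw [sub_add_cancel]
        _ ≤ max (wdeg w (f - H)) (wdeg w H) := wdeg_add_le w _ _
        _ ≤ γ := by
          rw [wdeg_eq_weightedTotalDegree' w H, hhom.weighted_total_degree hH]
          exact max_le hlt.le le_rfl
    · obtain ⟨d, hd⟩ := MvPolynomial.exists_coeff_ne_zero hH
      rw [← hhom hd]
      exact le_wdeg w (by rwa [MvPolynomial.mem_support_iff, hcoeff d (hhom hd)])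
  ext d
  simp only [coeff_lform, hdeg, WithBot.coe_inj]
  split_ifs with hd
  · exact hcoeff d hd
  · exact (hhom.coeff_eq_zero d hd).symm

theorem lform_one : lform w (1 : MvPolynomial (Fin n) k) = 1 :=
  lform_eq_of_wdeg_sub_lt w one_ne_zero (isWeightedHomogeneous_one k w)
    (by rw [sub_self, wdeg_zero]; exact WithBot.bot_lt_coe 0)

variable [IsOrderedAddMonoid Γ]

theorem wdeg_mul_le (f g : MvPolynomial (Fin n) k) :
    wdeg w (f * g) ≤ wdeg w f + wdeg w g := by
  classical
  refine (wdeg_le_iff w).mpr fun d hd => ?_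
  obtain ⟨a, ha, b, hb, rfl⟩ := Finset.mem_add.mp (MvPolynomial.support_mul f g hd)
  rw [map_add, WithBot.coe_add]
  exact add_le_add (le_wdeg w ha) (le_wdeg w hb)

theorem lform_mul (f g : MvPolynomial (Fin n) k) : lform w (f * g) = lform w f * lform w g := by
  obtain rfl | hf := eq_or_ne f 0
  · simp [lform_zero]
  obtain rfl | hg := eq_or_ne g 0
  · simp [lform_zero]
  obtain ⟨m₁, hm₁⟩ := exists_wdeg_eq w hf
  obtain ⟨m₂, hm₂⟩ := exists_wdeg_eq w hg
  refine lform_eq_of_wdeg_sub_lt w (mul_ne_zero (lform_ne_zero w hf) (lform_ne_zero w hg))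
    ((isWeightedHomogeneous_lform w hm₁).mul (isWeightedHomogeneous_lform w hm₂)) ?_
  have hsplit : f * g - lform w f * lform w g
      = (f - lform w f) * g + lform w f * (g - lform w g) := by ring
  rw [hsplit, WithBot.coe_add]
  refine (wdeg_add_le w _ _).trans_lt (max_lt ?_ ?_)
  · calc wdeg w ((f - lform w f) * g) ≤ wdeg w (f - lform w f) + wdeg w g := wdeg_mul_le w _ _
      _ < m₁ + m₂ := by
        rw [hm₂]
        exact WithBot.add_lt_add_right WithBot.coe_ne_bot (hm₁ ▸ wdeg_sub_lform_lt w hf)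
  · calc wdeg w (lform w f * (g - lform w g))
        ≤ wdeg w (lform w f) + wdeg w (g - lform w g) := wdeg_mul_le w _ _
      _ < m₁ + m₂ := by
        rw [wdeg_lform, hm₁]
        exact WithBot.add_lt_add_left WithBot.coe_ne_bot (hm₂ ▸ wdeg_sub_lform_lt w hg)

@[simps]
noncomputable def lformHom : MvPolynomial (Fin n) k →*₀ MvPolynomial (Fin n) k where
  toFun := lform w
  map_zero' := lform_zero w
  map_one' := lform_one w
  map_mul' := lform_mul w

variable {r : ℕ} {g : Fin r → MvPolynomial (Fin n) k} {δ : Fin r → Γ}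

theorem lform_finsuppProd_pow (d : Fin r →₀ ℕ) :
    lform w (d.prod fun i e => g i ^ e) = d.prod fun i e => lform w (g i) ^ e := by
  simpa only [map_pow, lformHom_apply] using map_finsuppProd (lformHom w) d fun i e => g i ^ e

theorem wdeg_finsuppProd_pow (hδ : ∀ i, wdeg w (g i) = δ i) (d : Fin r →₀ ℕ) :
    wdeg w (d.prod fun i e => g i ^ e) = Finsupp.weight δ d := by
  have hg : ∀ i, lform w (g i) ≠ 0 := fun i =>
    lform_ne_zero w fun h0 => by simpa [h0, wdeg_zero] using hδ i
  have hne : (d.prod fun i e => lform w (g i) ^ e) ≠ 0 :=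
    Finset.prod_ne_zero_iff.mpr fun i _ => pow_ne_zero _ (hg i)
  rw [← wdeg_lform, lform_finsuppProd_pow, wdeg_eq_weightedTotalDegree',
    (isWeightedHomogeneous_finsuppProd_pow (fun i => isWeightedHomogeneous_lform w (hδ i)) d
      ).weighted_total_degree hne]

theorem wdeg_aeval_le (hδ : ∀ i, wdeg w (g i) = δ i) (P : MvPolynomial (Fin r) k) :
    wdeg w (MvPolynomial.aeval g P) ≤ wdeg δ P := by
  conv_lhs => rw [P.as_sum, map_sum]
  refine Finset.sum_induction _ (fun p => wdeg w p ≤ wdeg δ P)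
    (fun p q hp hq => (wdeg_add_le w p q).trans (max_le hp hq)) (by simp [wdeg_zero])
    fun d hd => ?_
  rw [MvPolynomial.aeval_monomial, ← Algebra.smul_def]
  exact (wdeg_smul_le w _ _).trans ((wdeg_finsuppProd_pow w hδ d).trans_le (le_wdeg δ hd))

theorem wdeg_aeval_sub_aeval_lform_lt (hδ : ∀ i, wdeg w (g i) = δ i)
    {Q : MvPolynomial (Fin r) k} {m : Γ} (hQ : IsWeightedHomogeneous δ Q m) :
    wdeg w (MvPolynomial.aeval g Q - MvPolynomial.aeval (fun i => lform w (g i)) Q) < m := by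
  induction hQ using IsWeightedHomogeneous.induction_on with
  | zero => simp [wdeg_zero]
  | add p q _ _ hp hq =>
    rw [map_add, map_add, add_sub_add_comm]
    exact (wdeg_add_le w _ _).trans_lt (max_lt hp hq)
  | monomial d c hd =>
    rw [MvPolynomial.aeval_monomial, MvPolynomial.aeval_monomial, ← mul_sub,
      ← Algebra.smul_def, ← lform_finsuppProd_pow, ← hd, ← wdeg_finsuppProd_pow w hδ]
    refine (wdeg_smul_le w _ _).trans_lt (wdeg_sub_lform_lt w fun h0 => ?_)
    simpa [h0, wdeg_zero] using wdeg_finsuppProd_pow w hδ d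

theorem lform_aeval (hδ : ∀ i, wdeg w (g i) = δ i) {P : MvPolynomial (Fin r) k}
    (hP : MvPolynomial.aeval (fun i => lform w (g i)) (lform δ P) ≠ 0) :
    lform w (MvPolynomial.aeval g P) = MvPolynomial.aeval (fun i => lform w (g i)) (lform δ P) := by
  have hP₀ : P ≠ 0 := by rintro rfl; simp [lform_zero] at hP
  obtain ⟨m, hm⟩ := exists_wdeg_eq δ hP₀
  have hlead := isWeightedHomogeneous_lform δ hm
  refine lform_eq_of_wdeg_sub_lt w hP
    (hlead.aeval fun i => isWeightedHomogeneous_lform w (hδ i)) ?_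
  have hsplit : MvPolynomial.aeval g P - MvPolynomial.aeval (fun i => lform w (g i)) (lform δ P)
      = MvPolynomial.aeval g (P - lform δ P) + (MvPolynomial.aeval g (lform δ P)
          - MvPolynomial.aeval (fun i => lform w (g i)) (lform δ P)) := by
    rw [map_sub]; ring
  rw [hsplit]
  exact (wdeg_add_le w _ _).trans_lt (max_lt
    ((wdeg_aeval_le w hδ _).trans_lt (hm ▸ wdeg_sub_lform_lt δ hP₀))
    (wdeg_aeval_sub_aeval_lform_lt w hδ hlead))

end LeadingForm

/-- If `g_1^w, …, g_r^w` are algebraically independent over `k`, then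
`k[g_1,…,g_r]^w = k[g_1^w,…,g_r^w]`. -/
theorem stmt14 (r : ℕ) (g : Fin r → MvPolynomial (Fin n) k) (w : Fin n → Γ)
    (hind : AlgebraicIndependent k fun i => lform w (g i)) :
    initAlg w (Algebra.adjoin k (Set.range g))
      = Algebra.adjoin k (Set.range fun i => lform w (g i)) := by
  have hg : ∀ i, g i ≠ 0 := fun i h0 => hind.ne_zero i (by rw [h0, lform_zero])
  choose δ hδ using fun i => exists_wdeg_eq w (hg i)
  refine le_antisymm (Algebra.adjoin_le ?_) (Algebra.adjoin_mono ?_)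
  · rintro _ ⟨f, ⟨hf, hf₀ : f ≠ 0⟩, rfl⟩
    rw [Algebra.adjoin_range_eq_range_aeval] at hf ⊢
    obtain ⟨P, rfl⟩ := hf
    have hP₀ : P ≠ 0 := by rintro rfl; exact hf₀ (map_zero _)
    have hP : MvPolynomial.aeval (fun i => lform w (g i)) (lform δ P) ≠ 0 :=
      (map_ne_zero_iff _ hind).mpr (lform_ne_zero δ hP₀)
    exact ⟨lform δ P, (lform_aeval w hδ hP).symm⟩
  · rintro _ ⟨i, rfl⟩
    exact ⟨g i, ⟨Algebra.subset_adjoin ⟨i, rfl⟩, hg i⟩, rfl⟩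
end
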